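/- Let D be the diagonal operator Deₖ = dₖeₖ (dₙ strictly increasing), εₙ > 0, and qₙ the projections onto ℂfₙ with fₙ = (1+εₙ²)^{-1/2}(eₙ+εₙe_{n+1}). If a = Σ_{i=1}^{l} α_{2n_i} q_{2n_i} with n₁ < ⋯ < n_l satisfies [D,a] = 0 on the domain, then α_{2n_i} = 0 for all i; hence the only elements of A = span{1, q_{2n} : n ∈ ℕ} commuting with D are the scalar multiples of the identity. -/

import Mathlib

noncomputable section
open scoped ENNReal ComplexOrder

local notation "ℓ²" => lp (fun _ : ℕ => ℂ) 2

/-- Build an element of `ℓ²(ℕ)` from a square-summable sequence. -/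
def mkLp (f : ℕ → ℂ) (hf : Memℓp f 2) : ℓ² := ⟨f, hf⟩

@[simp] lemma mkLp_apply (f : ℕ → ℂ) (hf : Memℓp f 2) (n : ℕ) : (mkLp f hf) n = f n := rfl

/-- The standard orthonormal basis vectors of `ℓ²(ℕ)`. -/
def e (n : ℕ) : ℓ² := lp.single 2 n 1

/-- The maximal domain of the diagonal operator with eigenvalues `d n`. -/
def domD (d : ℕ → ℝ) : Submodule ℂ ℓ² where
  carrier := {x | Memℓp (fun n => (d n : ℂ) * x n) 2}
  zero_mem' := by
    show Memℓp _ 2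
    convert zero_memℓp (E := fun _ : ℕ => ℂ) (p := 2) using 1
    funext n; simp
  add_mem' := by
    intro x y hx hy
    have h := hx.add hy
    have : (fun n => (d n : ℂ) * (x + y) n) = fun n => (d n : ℂ) * x n + (d n : ℂ) * y n := by
      funext n; simp [mul_add]
    show Memℓp _ 2
    rw [this]; exact h
  smul_mem' := by
    intro c x hx
    have h := hx.const_smul c
    have : (fun n => (d n : ℂ) * (c • x) n) = fun n => c • ((d n : ℂ) * x n) := by
      funext n; simp [smul_eq_mul]; ring
    show Memℓp _ 2
    rw [this]; exact h

/-- The self-adjoint diagonal operator `D eₙ = dₙ eₙ` on its maximal domain. -/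
def Dop (d : ℕ → ℝ) : ℓ² →ₗ.[ℂ] ℓ² where
  domain := domD d
  toFun :=
    { toFun := fun x => mkLp (fun n => (d n : ℂ) * (x : ℓ²) n) x.2
      map_add' := by
        intro x y
        apply lp.ext
        funext n
        simp [mkLp, mul_add]
        rfl
      map_smul' := by
        intro c x
        apply lp.ext
        funext n
        simp [mkLp, smul_eq_mul]
        ring }

local notation "⟪" x ", " y "⟫" => @inner ℂ _ _ x y

/-- The unit vectors `fₙ = (1+εₙ²)^{-1/2}(eₙ + εₙ e_{n+1})`. -/
def f (ε : ℕ → ℝ) (n : ℕ) : ℓ² :=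
  (((1 + ε n ^ 2 : ℝ) ^ (-(1 / 2 : ℝ)) : ℝ) : ℂ) • (e n + ((ε n : ℝ) : ℂ) • e (n + 1))

/-- The rank-one orthogonal projection `qₙ` onto `ℂ fₙ`. -/
def q (ε : ℕ → ℝ) (n : ℕ) : lp (fun _ : ℕ => ℂ) 2 →L[ℂ] lp (fun _ : ℕ => ℂ) 2 :=
  (innerSL ℂ (f ε n)).smulRight (f ε n)

/-
Every `q_{2n}` maps `e_{2n}` to a nonzero multiple of `f_{2n}`, and kills `e_{2n'}` for `n' ≠ n`
since the supports `{2n', 2n'+1}` of the `f_{2n'}` are disjoint. Hence `a e_{2nᵢ} = αᵢ q_{2nᵢ} e_{2nᵢ}`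
has the coordinate `αᵢ ε_{2nᵢ} / (1 + ε_{2nᵢ}²)` at `2nᵢ + 1`. On the other hand, an operator `a`
commuting with the diagonal operator `D` maps `e_m` into the `d_m`-eigenspace of `D`, which is `ℂ e_m`
when the `dₖ` are distinct; so that coordinate vanishes and `αᵢ = 0`. For `a = c + b` in
`span{1, q_{2n}}`, `b` commutes with `D` as well, hence `b = 0`.
-/

@[simp] lemma e_apply (n k : ℕ) : e n k = if k = n then 1 else 0 := by
  rw [e, lp.single_apply]
  split_ifs with h <;> simp [h]

lemma e_mem_domD (d : ℕ → ℝ) (m : ℕ) : e m ∈ domD d := by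
  have : (fun k => (d k : ℂ) * e m k) = ⇑((d m : ℂ) • e m) := by
    funext k
    simp only [lp.coeFn_smul, Pi.smul_apply, smul_eq_mul, e_apply]
    split_ifs with h <;> simp [h]
  show Memℓp _ 2
  rw [this]
  exact lp.memℓp _

lemma Dop_apply_apply (d : ℕ → ℝ) (x : (Dop d).domain) (k : ℕ) :
    (Dop d x : ℓ²) k = (d k : ℂ) * (x : ℓ²) k := rfl

lemma Dop_e (d : ℕ → ℝ) (m : ℕ) : Dop d ⟨e m, e_mem_domD d m⟩ = (d m : ℂ) • e m := by
  ext k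
  simp only [Dop_apply_apply, lp.coeFn_smul, Pi.smul_apply, smul_eq_mul, e_apply]
  split_ifs with h <;> simp [h]

lemma f_mem_domD (d ε : ℕ → ℝ) (m : ℕ) : f ε m ∈ domD d :=
  (domD d).smul_mem _ ((domD d).add_mem (e_mem_domD d m)
    ((domD d).smul_mem _ (e_mem_domD d (m + 1))))

lemma q_apply (ε : ℕ → ℝ) (n : ℕ) (x : ℓ²) :
    q ε n x = ⟪f ε n, x⟫ • f ε n := rfl

lemma q_apply_mem_domD (d ε : ℕ → ℝ) (n : ℕ) (x : ℓ²) : q ε n x ∈ domD d :=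
  (domD d).smul_mem _ (f_mem_domD d ε n)

lemma inner_f_e (ε : ℕ → ℝ) (n k : ℕ) :
    ⟪f ε n, e k⟫ = (((1 + ε n ^ 2) ^ (-(1 / 2 : ℝ)) : ℝ) : ℂ) *
      ((if k = n then 1 else 0) + ε n * (if k = n + 1 then 1 else 0)) := by
  simp only [f, e, inner_smul_left, inner_add_left, lp.inner_single_left]
  simp [mul_add, Pi.single_apply, eq_comm]

lemma f_apply_succ (ε : ℕ → ℝ) (n : ℕ) :
    f ε n (n + 1) = (((1 + ε n ^ 2) ^ (-(1 / 2 : ℝ)) : ℝ) : ℂ) * ε n := by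
  simp only [f, lp.coeFn_smul, lp.coeFn_add, Pi.add_apply, Pi.smul_apply, smul_eq_mul, e_apply]
  simp

lemma q_apply_e_of_ne (ε : ℕ → ℝ) {n k : ℕ} (h₁ : k ≠ n) (h₂ : k ≠ n + 1) :
    q ε n (e k) = 0 := by
  simp [q_apply, inner_f_e, h₁, h₂]

lemma sum_smul_q_two_mul_apply_e {ι : Type*} [Fintype ι] (ε : ℕ → ℝ) {n : ι → ℕ}
    (hn : Function.Injective n) (α : ι → ℂ) (i : ι) :
    (∑ j, α j • q ε (2 * n j)) (e (2 * n i)) = α i • q ε (2 * n i) (e (2 * n i)) := by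
  rw [FunLike.coe_sum, Finset.sum_apply, Finset.sum_eq_single i]
  · rfl
  · intro j _ hji
    have : n i ≠ n j := hn.ne (Ne.symm hji)
    rw [FunLike.coe_smul, Pi.smul_apply, q_apply_e_of_ne ε (by omega) (by omega), smul_zero]
  · exact fun h => (h (Finset.mem_univ i)).elim

def CommutesWithDop (d : ℕ → ℝ) (a : ℓ² →L[ℂ] ℓ²) : Prop :=
  ∀ ξ ∈ Submodule.span ℂ (Set.range e), ∀ (hξ : ξ ∈ domD d) (ha : a ξ ∈ domD d),
    Dop d ⟨a ξ, ha⟩ = a (Dop d ⟨ξ, hξ⟩)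

namespace CommutesWithDop

variable {d : ℕ → ℝ} {a : ℓ² →L[ℂ] ℓ²}

lemma apply_e_apply_eq_zero (h : CommutesWithDop d a) (hd : Function.Injective d) {m k : ℕ}
    (hkm : k ≠ m) (hm : a (e m) ∈ domD d) : a (e m) k = 0 := by
  have hk := congrArg (· k) (h (e m) (Submodule.subset_span ⟨m, rfl⟩) (e_mem_domD d m) hm)
  simp only [Dop_apply_apply, Dop_e, map_smul, lp.coeFn_smul, Pi.smul_apply, smul_eq_mul] at hk
  have hdkm : (d k : ℂ) - d m ≠ 0 := sub_ne_zero.mpr (by exact_mod_cast hd.ne hkm)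
  have hprod : ((d k : ℂ) - d m) * a (e m) k = 0 := by linear_combination hk
  exact (mul_eq_zero.mp hprod).resolve_left hdkm

lemma of_smul_one_add {c : ℂ} (h : CommutesWithDop d (c • 1 + a)) : CommutesWithDop d a := by
  intro ξ hspan hξ haξ
  have hsum : (c • 1 + a) ξ ∈ domD d := (domD d).add_mem ((domD d).smul_mem c hξ) haξ
  have hcomm := h ξ hspan hξ hsum
  have hsplit : (⟨(c • 1 + a) ξ, hsum⟩ : (Dop d).domain) = c • ⟨ξ, hξ⟩ + ⟨a ξ, haξ⟩ := rfl
  rw [hsplit, (Dop d).map_add, (Dop d).map_smul] at hcomm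
  exact add_left_cancel hcomm

end CommutesWithDop

theorem coeff_eq_zero_of_commutesWithDop {d : ℕ → ℝ} (hd : Function.Injective d) {ε : ℕ → ℝ}
    (hε : ∀ n, ε n ≠ 0) {ι : Type*} [Fintype ι] {n : ι → ℕ} (hn : Function.Injective n)
    (α : ι → ℂ) (hcomm : CommutesWithDop d (∑ i, α i • q ε (2 * n i))) (i : ι) : α i = 0 := by
  have hae := sum_smul_q_two_mul_apply_e ε hn α i
  set m := 2 * n i
  have hmem : (∑ j, α j • q ε (2 * n j)) (e m) ∈ domD d :=
    hae ▸ (domD d).smul_mem _ (q_apply_mem_domD d ε m _)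
  have hcoord := hcomm.apply_e_apply_eq_zero hd (k := m + 1) (by omega) hmem
  have hC : (1 + ε m ^ 2) ^ (-(1 / 2 : ℝ)) ≠ 0 := (Real.rpow_pos_of_pos (by positivity) _).ne'
  rw [hae, lp.coeFn_smul, Pi.smul_apply, q_apply, lp.coeFn_smul, Pi.smul_apply, inner_f_e,
    f_apply_succ] at hcoord
  generalize (1 + ε m ^ 2) ^ (-(1 / 2 : ℝ)) = C at hC hcoord
  simpa [hC, hε m] using hcoord

/-- If a linear combination `a = Σ αᵢ q_{2nᵢ}` commutes with the diagonal operator `D`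
(on the span of the basis vectors), then all coefficients vanish; consequently the only
elements of `span{1, q_{2n}}` commuting with `D` are the scalar multiples of the identity. -/
theorem commutant_trivial
    (d : ℕ → ℝ) (hd_mono : StrictMono d) (ε : ℕ → ℝ) (hε : ∀ n, 0 < ε n) :
    (∀ (l : ℕ) (n : Fin l → ℕ), StrictMono n → ∀ α : Fin l → ℂ,
      ∀ a : lp (fun _ : ℕ => ℂ) 2 →L[ℂ] lp (fun _ : ℕ => ℂ) 2,
      a = ∑ i : Fin l, α i • q ε (2 * n i) →
      (∀ ξ ∈ Submodule.span ℂ (Set.range e), ∀ (hξ : ξ ∈ domD d) (ha : a ξ ∈ domD d),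
        Dop d ⟨a ξ, ha⟩ = a (Dop d ⟨ξ, hξ⟩)) →
      ∀ i, α i = 0) ∧
    (∀ a ∈ Submodule.span ℂ ({1} ∪ Set.range (fun k : ℕ => q ε (2 * k))),
      (∀ ξ ∈ Submodule.span ℂ (Set.range e), ∀ (hξ : ξ ∈ domD d) (ha : a ξ ∈ domD d),
        Dop d ⟨a ξ, ha⟩ = a (Dop d ⟨ξ, hξ⟩)) →
      ∃ c : ℂ, a = c • (1 : lp (fun _ : ℕ => ℂ) 2 →L[ℂ] lp (fun _ : ℕ => ℂ) 2)) := by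
  have hε' : ∀ n, ε n ≠ 0 := fun n => (hε n).ne'
  refine ⟨fun l n hn α a ha hcomm => ?_, fun a ha hcomm => ?_⟩
  · subst ha
    exact coeff_eq_zero_of_commutesWithDop hd_mono.injective hε' hn.injective α hcomm
  · rw [Submodule.span_union, Submodule.mem_sup] at ha
    obtain ⟨_, hc, b, hb, rfl⟩ := ha
    obtain ⟨c, rfl⟩ := Submodule.mem_span_singleton.mp hc
    obtain ⟨μ, rfl⟩ := Finsupp.mem_span_range_iff_exists_finsupp.mp hb
    have hμ : μ.sum (fun k x => x • q ε (2 * k)) = ∑ k : μ.support, μ k • q ε (2 * k) :=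
      (Finset.sum_coe_sort _ _).symm
    rw [hμ] at hcomm ⊢
    have hzero := coeff_eq_zero_of_commutesWithDop hd_mono.injective hε' Subtype.val_injective
      _ (CommutesWithDop.of_smul_one_add hcomm)
    exact ⟨c, by simp [hzero]⟩
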